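/- Define r₁ = A₁₁ + A₁₂ + B₁, r₂ = A₂₁ + A₂₂ + B₂, and for x ∈ ℤ × ℤ set α(x) = A₁₁(x+e₁)A₂₂(x+e₂) − A₁₂(x+e₂)A₂₁(x+e₁), β₁(x) = r₁(x)A₂₂(x+e₂) − r₂(x)A₁₂(x+e₂), β₂(x) = r₂(x)A₁₁(x+e₁) − r₁(x)A₂₁(x+e₁). Suppose α(x) ≠ 0, β₁(x) ≠ 0 and β₂(x) ≠ 0 for all x ∈ ℕ × ℕ, and that the compatibility condition β₁(x)·α(x+e₂)·β₂(x+e₁) = β₂(x)·α(x+e₁)·β₁(x+e₂) holds for all x ∈ ℕ × ℕ. Then there exists a function W : ℕ × ℕ → ℝ with W(0,0) = 1 and W(x) ≠ 0 for all x, such that α(x)·W(x+e₁) = β₁(x)·W(x) and α(x)·W(x+e₂) = β₂(x)·W(x) for all x ∈ ℕ × ℕ; consequently W satisfies A₁₁(x+e₁)W(x+e₁) + A₁₂(x+e₂)W(x+e₂) = r₁(x)W(x) and A₂₁(x+e₁)W(x+e₁) + A₂₂(x+e₂)W(x+e₂) = r₂(x)W(x) for all x ∈ ℕ × ℕ. 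-/

import Mathlib

/-!
Prescribing `α W(x+e₁) = β₁ W(x)` and `α W(x+e₂) = β₂ W(x)` fixes the ratios `W(x+eᵢ)/W(x)`,
and the compatibility condition says exactly that these ratios multiply to the same value along
both sides of every unit square. Hence the product of the ratios along the path
`(0,0) → (m,0) → (m,n)` is a solution. The two remaining identities are Cramer's rule: the
determinant of `(A₁₁(x+e₁), A₁₂(x+e₂); A₂₁(x+e₁), A₂₂(x+e₂))` is `α(x)`, and `β₁, β₂` are the
Cramer numerators for the right-hand side `(r₁(x), r₂(x))`.
-/

open MvPolynomial

noncomputable section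

/-- Evaluation of a two-variable real polynomial at a lattice point of `ℕ × ℕ`. -/
def pevN (p : MvPolynomial (Fin 2) ℝ) (x : ℕ × ℕ) : ℝ :=
  eval (fun i => if i = 0 then (x.1 : ℝ) else (x.2 : ℝ)) p

open Finset

section LatticePathProd

variable {M : Type*} [CommMonoid M]

def latticePathProd (f g : ℕ × ℕ → M) (x : ℕ × ℕ) : M :=
  (∏ j ∈ range x.1, f (j, 0)) * ∏ k ∈ range x.2, g (x.1, k)

@[simp]
theorem latticePathProd_zero (f g : ℕ × ℕ → M) : latticePathProd f g (0, 0) = 1 := by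
  simp [latticePathProd]

theorem latticePathProd_succ_snd (f g : ℕ × ℕ → M) (m n : ℕ) :
    latticePathProd f g (m, n + 1) = g (m, n) * latticePathProd f g (m, n) := by
  simp only [latticePathProd, prod_range_succ]
  ac_rfl

theorem latticePathProd_succ_fst {f g : ℕ × ℕ → M}
    (hcompat : ∀ x : ℕ × ℕ, f x * g (x.1 + 1, x.2) = g x * f (x.1, x.2 + 1)) (m n : ℕ) :
    latticePathProd f g (m + 1, n) = f (m, n) * latticePathProd f g (m, n) := by
  induction n with
  | zero => simp only [latticePathProd, prod_range_succ, range_zero, prod_empty]; ac_rfl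
  | succ n ih =>
    calc latticePathProd f g (m + 1, n + 1)
        = (f (m, n) * g (m + 1, n)) * latticePathProd f g (m, n) := by
          rw [latticePathProd_succ_snd, ih, mul_left_comm, mul_assoc]
      _ = f (m, n + 1) * latticePathProd f g (m, n + 1) := by
          rw [hcompat (m, n), latticePathProd_succ_snd, mul_comm (g (m, n)), mul_assoc]

theorem latticePathProd_ne_zero {M₀ : Type*} [CommMonoidWithZero M₀] [NoZeroDivisors M₀]
    [Nontrivial M₀] {f g : ℕ × ℕ → M₀} (hf : ∀ x, f x ≠ 0) (hg : ∀ x, g x ≠ 0) (x : ℕ × ℕ) :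
    latticePathProd f g x ≠ 0 :=
  mul_ne_zero (prod_ne_zero_iff.mpr fun _ _ => hf _) (prod_ne_zero_iff.mpr fun _ _ => hg _)

end LatticePathProd

theorem cramer_two {R : Type*} [CommRing R] [IsDomain R] {a b c d p q u v : R}
    (hdet : a * d - b * c ≠ 0) (hu : (a * d - b * c) * u = p * d - q * b)
    (hv : (a * d - b * c) * v = q * a - p * c) :
    a * u + b * v = p ∧ c * u + d * v = q :=
  ⟨mul_left_cancel₀ hdet (by linear_combination a * hu + b * hv),
    mul_left_cancel₀ hdet (by linear_combination c * hu + d * hv)⟩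

theorem stmt8_general (A11 A12 A21 A22 : MvPolynomial (Fin 2) ℝ)
    (r1 r2 : MvPolynomial (Fin 2) ℝ)
    (α β1 β2 : ℕ × ℕ → ℝ)
    (hα : ∀ x : ℕ × ℕ, α x =
      pevN A11 (x.1 + 1, x.2) * pevN A22 (x.1, x.2 + 1) -
        pevN A12 (x.1, x.2 + 1) * pevN A21 (x.1 + 1, x.2))
    (hβ1 : ∀ x : ℕ × ℕ, β1 x =
      pevN r1 x * pevN A22 (x.1, x.2 + 1) - pevN r2 x * pevN A12 (x.1, x.2 + 1))
    (hβ2 : ∀ x : ℕ × ℕ, β2 x =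
      pevN r2 x * pevN A11 (x.1 + 1, x.2) - pevN r1 x * pevN A21 (x.1 + 1, x.2))
    (hα0 : ∀ x : ℕ × ℕ, α x ≠ 0)
    (hβ10 : ∀ x : ℕ × ℕ, β1 x ≠ 0) (hβ20 : ∀ x : ℕ × ℕ, β2 x ≠ 0)
    (hcompat : ∀ x : ℕ × ℕ,
      β1 x * α (x.1, x.2 + 1) * β2 (x.1 + 1, x.2) =
        β2 x * α (x.1 + 1, x.2) * β1 (x.1, x.2 + 1)) :
    ∃ W : ℕ × ℕ → ℝ, W (0, 0) = 1 ∧ (∀ x : ℕ × ℕ, W x ≠ 0) ∧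
      (∀ x : ℕ × ℕ, α x * W (x.1 + 1, x.2) = β1 x * W x) ∧
      (∀ x : ℕ × ℕ, α x * W (x.1, x.2 + 1) = β2 x * W x) ∧
      (∀ x : ℕ × ℕ,
        pevN A11 (x.1 + 1, x.2) * W (x.1 + 1, x.2) +
          pevN A12 (x.1, x.2 + 1) * W (x.1, x.2 + 1) = pevN r1 x * W x) ∧
      (∀ x : ℕ × ℕ,
        pevN A21 (x.1 + 1, x.2) * W (x.1 + 1, x.2) +
          pevN A22 (x.1, x.2 + 1) * W (x.1, x.2 + 1) = pevN r2 x * W x) := by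
  set W := latticePathProd (fun x => β1 x / α x) (fun x => β2 x / α x)
  have hratio : ∀ x : ℕ × ℕ, β1 x / α x * (β2 (x.1 + 1, x.2) / α (x.1 + 1, x.2)) =
      β2 x / α x * (β1 (x.1, x.2 + 1) / α (x.1, x.2 + 1)) := fun x => by
    rw [div_mul_div_comm, div_mul_div_comm, div_eq_div_iff (mul_ne_zero (hα0 _) (hα0 _))
      (mul_ne_zero (hα0 _) (hα0 _))]
    linear_combination α x * hcompat x
  have hW1 : ∀ x : ℕ × ℕ, α x * W (x.1 + 1, x.2) = β1 x * W x := fun x => by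
    simp only [W]
    rw [latticePathProd_succ_fst hratio, ← mul_assoc, mul_div_cancel₀ _ (hα0 x)]
  have hW2 : ∀ x : ℕ × ℕ, α x * W (x.1, x.2 + 1) = β2 x * W x := fun x => by
    simp only [W]
    rw [latticePathProd_succ_snd, ← mul_assoc, mul_div_cancel₀ _ (hα0 x)]
  have hsystem : ∀ x : ℕ × ℕ,
      pevN A11 (x.1 + 1, x.2) * W (x.1 + 1, x.2) +
          pevN A12 (x.1, x.2 + 1) * W (x.1, x.2 + 1) = pevN r1 x * W x ∧
        pevN A21 (x.1 + 1, x.2) * W (x.1 + 1, x.2) +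
          pevN A22 (x.1, x.2 + 1) * W (x.1, x.2 + 1) = pevN r2 x * W x := fun x =>
    cramer_two (hα x ▸ hα0 x)
      (by linear_combination hW1 x - W (x.1 + 1, x.2) * hα x + W x * hβ1 x)
      (by linear_combination hW2 x - W (x.1, x.2 + 1) * hα x + W x * hβ2 x)
  refine ⟨W, latticePathProd_zero _ _,
    latticePathProd_ne_zero (fun x => div_ne_zero (hβ10 x) (hα0 x))
      (fun x => div_ne_zero (hβ20 x) (hα0 x)),
    hW1, hW2, fun x => (hsystem x).1, fun x => (hsystem x).2⟩

/-- sufficiency — the compatibility condition implies the existence of a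
nonvanishing weight `W` on `ℕ × ℕ` with `W(0,0) = 1` solving the first order system,
and hence making `W·𝒟` self-adjoint. -/
theorem stmt8 (A11 A12 A21 A22 B1 B2 : MvPolynomial (Fin 2) ℝ)
    (r1 r2 : MvPolynomial (Fin 2) ℝ)
    (hr1 : r1 = A11 + A12 + B1) (hr2 : r2 = A21 + A22 + B2)
    (α β1 β2 : ℕ × ℕ → ℝ)
    (hα : ∀ x : ℕ × ℕ, α x =
      pevN A11 (x.1 + 1, x.2) * pevN A22 (x.1, x.2 + 1) -
        pevN A12 (x.1, x.2 + 1) * pevN A21 (x.1 + 1, x.2))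
    (hβ1 : ∀ x : ℕ × ℕ, β1 x =
      pevN r1 x * pevN A22 (x.1, x.2 + 1) - pevN r2 x * pevN A12 (x.1, x.2 + 1))
    (hβ2 : ∀ x : ℕ × ℕ, β2 x =
      pevN r2 x * pevN A11 (x.1 + 1, x.2) - pevN r1 x * pevN A21 (x.1 + 1, x.2))
    (hα0 : ∀ x : ℕ × ℕ, α x ≠ 0)
    (hβ10 : ∀ x : ℕ × ℕ, β1 x ≠ 0) (hβ20 : ∀ x : ℕ × ℕ, β2 x ≠ 0)
    (hcompat : ∀ x : ℕ × ℕ,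
      β1 x * α (x.1, x.2 + 1) * β2 (x.1 + 1, x.2) =
        β2 x * α (x.1 + 1, x.2) * β1 (x.1, x.2 + 1)) :
    ∃ W : ℕ × ℕ → ℝ, W (0, 0) = 1 ∧ (∀ x : ℕ × ℕ, W x ≠ 0) ∧
      (∀ x : ℕ × ℕ, α x * W (x.1 + 1, x.2) = β1 x * W x) ∧
      (∀ x : ℕ × ℕ, α x * W (x.1, x.2 + 1) = β2 x * W x) ∧
      (∀ x : ℕ × ℕ,
        pevN A11 (x.1 + 1, x.2) * W (x.1 + 1, x.2) +
          pevN A12 (x.1, x.2 + 1) * W (x.1, x.2 + 1) = pevN r1 x * W x) ∧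
      (∀ x : ℕ × ℕ,
        pevN A21 (x.1 + 1, x.2) * W (x.1 + 1, x.2) +
          pevN A22 (x.1, x.2 + 1) * W (x.1, x.2 + 1) = pevN r2 x * W x) :=
  stmt8_general A11 A12 A21 A22 r1 r2 α β1 β2 hα hβ1 hβ2 hα0 hβ10 hβ20 hcompat
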